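/- arXiv:1004.0129 — 6 statements merged into one kernel-verified Lean document; each statement's English description precedes it below -/
import Mathlib

section
/- Let $e\in\mathbb{C}$ with $e\neq 0$ and $e\neq -1$, and define $W(t,u)=\tfrac{t(t-e)\,u(u-e)}{(t+1)(u+1)}$ on the open set $V=\{(t,u)\in\mathbb{C}^2 : t\neq -1,\ u\neq -1\}$. The set of critical points of $W$ on $V$ is exactly the union of the four points of $\{0,e\}\times\{0,e\}$ and the four points $(t,u)$ with $t^2+2t-e=0$ and $u^2+2u-e=0$; this set has exactly $8$ elements, $W$ vanishes at the four points of $\{0,e\}\times\{0,e\}$, and $W$ is nonzero at the other four critical points. -/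
/-- The deformed superpotential `w'` of the compactified Landau–Ginzburg mirror of
a degree four del Pezzo surface. -/
noncomputable def delPezzoW' (e : ℂ) (p : ℂ × ℂ) : ℂ :=
  p.1 * (p.1 - e) * p.2 * (p.2 - e) / ((p.1 + 1) * (p.2 + 1))

/-!
`W(t, u) = f(t) f(u)` with `f(x) = x (x - e) / (x + 1)` and `f'(x) = (x² + 2x - e) / (x + 1)²`,
so `(t, u)` is critical iff `f'(t) f(u) = 0` and `f(t) f'(u) = 0`. Since `e ∉ {0, -1}`, the zeros
`{0, e}` of `f` and the two zeros of `x² + 2x - e` are disjoint, so either both coordinates are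
zeros of `f` or both are zeros of `f'`.
-/

open Set

theorem fderiv_mul_prod_eq_zero_iff {𝕜 : Type*} [NontriviallyNormedField 𝕜] {f g : 𝕜 → 𝕜}
    {f' g' t u : 𝕜} (hf : HasDerivAt f f' t) (hg : HasDerivAt g g' u) :
    fderiv 𝕜 (fun p : 𝕜 × 𝕜 => f p.1 * g p.2) (t, u) = 0 ↔ f' * g u = 0 ∧ f t * g' = 0 := by
  have hfg : HasFDerivAt (fun p : 𝕜 × 𝕜 => f p.1 * g p.2)
      (f t • g' • ContinuousLinearMap.snd 𝕜 𝕜 𝕜 + g u • f' • ContinuousLinearMap.fst 𝕜 𝕜 𝕜)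
      (t, u) :=
    (hf.comp_hasFDerivAt (t, u) hasFDerivAt_fst).mul (hg.comp_hasFDerivAt (t, u) hasFDerivAt_snd)
  rw [hfg.fderiv]
  constructor
  · intro h
    constructor
    · simpa [mul_comm] using DFunLike.congr_fun h ((1 : 𝕜), (0 : 𝕜))
    · simpa using DFunLike.congr_fun h ((0 : 𝕜), (1 : 𝕜))
  · rintro ⟨h₁, h₂⟩
    ext <;> simp [h₁, h₂, mul_comm (g u)]

section Quadratic

variable {K : Type*} [Field K] {e x : K}

theorem sq_add_two_mul_sub_ne_zero (he0 : e ≠ 0) (he1 : e ≠ -1) (hx : x = 0 ∨ x = e) :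
    x ^ 2 + 2 * x - e ≠ 0 := by
  intro h
  rcases hx with rfl | rfl
  · exact he0 (by linear_combination -h)
  · exact mul_ne_zero he0 (fun h' => he1 (eq_neg_of_add_eq_zero_left h')) (by linear_combination h)

theorem ne_neg_one_of_sq_add_two_mul_sub_eq_zero (he1 : e ≠ -1) (hx : x ^ 2 + 2 * x - e = 0) :
    x ≠ -1 := by
  rintro rfl
  exact he1 (by linear_combination -hx)

theorem setOf_sq_add_two_mul_sub_eq_zero {s : K} (hs : s ^ 2 = 1 + e) :
    {x : K | x ^ 2 + 2 * x - e = 0} = {-1 + s, -1 - s} := by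
  ext x
  simp only [mem_ofPred_eq, mem_insert_iff, mem_singleton_iff]
  constructor
  · intro h
    have : (x - (-1 + s)) * (x - (-1 - s)) = 0 := by linear_combination h - hs
    rcases mul_eq_zero.mp this with h' | h'
    · exact Or.inl (sub_eq_zero.mp h')
    · exact Or.inr (sub_eq_zero.mp h')
  · rintro (rfl | rfl) <;> linear_combination hs

end Quadratic

theorem ncard_pair_prod_self {α : Type*} {a b : α} (hab : a ≠ b) :
    (({a, b} : Set α) ×ˢ ({a, b} : Set α)).ncard = 4 := by
  rw [ncard_prod, ncard_pair hab]

noncomputable def delPezzoFactor (e x : ℂ) : ℂ :=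
  x * (x - e) / (x + 1)

theorem delPezzoW'_eq_mul (e : ℂ) :
    delPezzoW' e = fun p : ℂ × ℂ => delPezzoFactor e p.1 * delPezzoFactor e p.2 := by
  funext p
  rw [delPezzoW', delPezzoFactor, delPezzoFactor, div_mul_div_comm]
  ring

theorem delPezzoFactor_eq_zero_iff (e : ℂ) {x : ℂ} (hx : x ≠ -1) :
    delPezzoFactor e x = 0 ↔ x = 0 ∨ x = e := by
  rw [delPezzoFactor, div_eq_zero_iff, or_iff_left (add_eq_zero_iff_eq_neg.not.mpr hx),
    mul_eq_zero, sub_eq_zero]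

theorem hasDerivAt_delPezzoFactor (e : ℂ) {x : ℂ} (hx : x ≠ -1) :
    HasDerivAt (delPezzoFactor e) ((x ^ 2 + 2 * x - e) / (x + 1) ^ 2) x := by
  have hx' : x + 1 ≠ 0 := add_eq_zero_iff_eq_neg.not.mpr hx
  have h := ((hasDerivAt_id' x).mul ((hasDerivAt_id' x).sub_const e)).div
    ((hasDerivAt_id' x).add_const 1) hx'
  exact h.congr_deriv (by simp only [Pi.mul_apply]; ring)

theorem fderiv_delPezzoW'_eq_zero_iff (e : ℂ) {t u : ℂ} (ht : t ≠ -1) (hu : u ≠ -1) :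
    fderiv ℂ (delPezzoW' e) (t, u) = 0 ↔
      (t ^ 2 + 2 * t - e = 0 ∨ u = 0 ∨ u = e) ∧ (t = 0 ∨ t = e ∨ u ^ 2 + 2 * u - e = 0) := by
  have hsq : ∀ {x : ℂ}, x ≠ -1 → (x + 1) ^ 2 ≠ 0 :=
    fun hx => pow_ne_zero 2 (add_eq_zero_iff_eq_neg.not.mpr hx)
  rw [delPezzoW'_eq_mul, fderiv_mul_prod_eq_zero_iff (hasDerivAt_delPezzoFactor e ht)
    (hasDerivAt_delPezzoFactor e hu), mul_eq_zero, mul_eq_zero,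
    delPezzoFactor_eq_zero_iff e ht, delPezzoFactor_eq_zero_iff e hu,
    div_eq_zero_iff, div_eq_zero_iff, or_iff_left (hsq ht), or_iff_left (hsq hu), or_assoc]

theorem delPezzoFactor_ne_zero {e x : ℂ} (he0 : e ≠ 0) (he1 : e ≠ -1)
    (hx : x ^ 2 + 2 * x - e = 0) : delPezzoFactor e x ≠ 0 := by
  rw [Ne, delPezzoFactor_eq_zero_iff e (ne_neg_one_of_sq_add_two_mul_sub_eq_zero he1 hx)]
  exact fun h => sq_add_two_mul_sub_ne_zero he0 he1 h hx

theorem setOf_fderiv_delPezzoW'_eq_zero {e : ℂ} (he0 : e ≠ 0) (he1 : e ≠ -1) :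
    {p : ℂ × ℂ | (p.1 ≠ -1 ∧ p.2 ≠ -1) ∧ fderiv ℂ (delPezzoW' e) p = 0} =
      ({0, e} : Set ℂ) ×ˢ ({0, e} : Set ℂ) ∪
        {x : ℂ | x ^ 2 + 2 * x - e = 0} ×ˢ {x : ℂ | x ^ 2 + 2 * x - e = 0} := by
  have hpair : ∀ {x : ℂ}, x = 0 ∨ x = e → x ≠ -1 := by
    rintro x (rfl | rfl)
    exacts [by norm_num, he1]
  have hsep : ∀ {x : ℂ}, x = 0 ∨ x = e → x ^ 2 + 2 * x - e ≠ 0 :=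
    sq_add_two_mul_sub_ne_zero he0 he1
  have hroot : ∀ {x : ℂ}, x ^ 2 + 2 * x - e = 0 → x ≠ -1 :=
    ne_neg_one_of_sq_add_two_mul_sub_eq_zero he1
  ext ⟨t, u⟩
  simp only [mem_ofPred_eq, mem_union, mem_prod, mem_insert_iff, mem_singleton_iff]
  constructor
  · rintro ⟨⟨ht, hu⟩, hcrit⟩
    rw [fderiv_delPezzoW'_eq_zero_iff e ht hu] at hcrit
    have := @hsep t
    have := @hsep u
    tauto
  · rintro (⟨ht, hu⟩ | ⟨ht, hu⟩)
    · refine ⟨⟨hpair ht, hpair hu⟩, (fderiv_delPezzoW'_eq_zero_iff e (hpair ht) (hpair hu)).2 ?_⟩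
      tauto
    · refine ⟨⟨hroot ht, hroot hu⟩, (fderiv_delPezzoW'_eq_zero_iff e (hroot ht) (hroot hu)).2 ?_⟩
      tauto

theorem stmt2 (e : ℂ) (he0 : e ≠ 0) (he1 : e ≠ -1) :
    {p : ℂ × ℂ | (p.1 ≠ -1 ∧ p.2 ≠ -1) ∧ fderiv ℂ (delPezzoW' e) p = 0} =
      (({0, e} : Set ℂ) ×ˢ ({0, e} : Set ℂ)) ∪
        {p : ℂ × ℂ | p.1 ^ 2 + 2 * p.1 - e = 0 ∧ p.2 ^ 2 + 2 * p.2 - e = 0} ∧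
    {p : ℂ × ℂ | (p.1 ≠ -1 ∧ p.2 ≠ -1) ∧ fderiv ℂ (delPezzoW' e) p = 0}.ncard = 8 ∧
    (∀ p ∈ (({0, e} : Set ℂ) ×ˢ ({0, e} : Set ℂ)), delPezzoW' e p = 0) ∧
    (∀ p ∈ {p : ℂ × ℂ | p.1 ^ 2 + 2 * p.1 - e = 0 ∧ p.2 ^ 2 + 2 * p.2 - e = 0},
      delPezzoW' e p ≠ 0) := by
  have hcrit := setOf_fderiv_delPezzoW'_eq_zero he0 he1
  refine ⟨hcrit, ?_, ?_, ?_⟩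
  · obtain ⟨s, hs⟩ := IsAlgClosed.exists_pow_nat_eq (1 + e) two_pos
    have hs0 : s ≠ 0 := by
      rintro rfl
      exact he1 (by linear_combination -hs)
    have hdisj : Disjoint ({0, e} : Set ℂ) {x : ℂ | x ^ 2 + 2 * x - e = 0} :=
      disjoint_left.mpr fun _ hx => sq_add_two_mul_sub_ne_zero he0 he1 hx
    rw [setOf_sq_add_two_mul_sub_eq_zero hs] at hdisj
    rw [hcrit, setOf_sq_add_two_mul_sub_eq_zero hs,
      ncard_union_eq (disjoint_prod.mpr (Or.inl hdisj)), ncard_pair_prod_self (Ne.symm he0),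
      ncard_pair_prod_self (fun h => hs0 (by linear_combination h / 2))]
  · rintro ⟨t, u⟩ ⟨ht, -⟩
    rcases ht with rfl | rfl <;> simp [delPezzoW'_eq_mul, delPezzoFactor]
  · rintro ⟨t, u⟩ ⟨ht, hu⟩
    simpa only [delPezzoW'_eq_mul] using
      mul_ne_zero (delPezzoFactor_ne_zero he0 he1 ht) (delPezzoFactor_ne_zero he0 he1 hu)
end

section
/- Let $a_1,a_2$ be nonzero complex numbers and define $f(x_1,x_3,x_4)=x_1+\tfrac{a_1x_3^3}{x_1}+x_3+x_4+\tfrac{a_2x_3^2}{x_4}$ on $(\mathbb{C}^\times)^3$. A point of $(\mathbb{C}^\times)^3$ is a critical point of $f$ if and only if it equals $P_s=\left(-\tfrac{(1+2s)^3}{27a_1},\ \tfrac{(1+2s)^2}{9a_1},\ \tfrac{s(1+2s)^2}{9a_1}\right)$ for some $s\in\mathbb{C}$ with $s^2=a_2$ and $1+2s\neq 0$, and then $f(P_s)=\tfrac{(1+2s)^3}{27a_1}$. In particular, if in addition $a_2\neq 1/4$, then $f$ has exactly two critical points, whose critical values are $\tfrac{1}{a_1}\left(\tfrac{1+2s}{3}\right)^3$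 as $s$ ranges over the two square roots of $a_2$. -/
/-- The superpotential of the affine Hori–Vafa mirror of a genus two curve, in the
coordinates `(x₁, x₃, x₄)` of `(ℂ*)³`. -/
noncomputable def genusTwoW (a₁ a₂ : ℂ) (p : ℂ × ℂ × ℂ) : ℂ :=
  p.1 + a₁ * p.2.1 ^ 3 / p.1 + p.2.1 + p.2.2 + a₂ * p.2.1 ^ 2 / p.2.2

/-- The critical point of the genus two mirror superpotential attached to a square
root `s` of `a₂`. -/
noncomputable def genusTwoCritPt (a₁ s : ℂ) : ℂ × ℂ × ℂ :=
  (-(1 + 2 * s) ^ 3 / (27 * a₁), (1 + 2 * s) ^ 2 / (9 * a₁),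
    s * (1 + 2 * s) ^ 2 / (9 * a₁))

/-!
Clearing denominators, the critical equations are `x₁² = a₁x₃³`, `x₄² = a₂x₃²` and
`3a₁x₃²x₄ + x₁x₄ + 2a₂x₁x₃ = 0`; the first two say `x₂ = x₁` and `x₅ = x₄`. Writing `x₄ = s x₃`,
the second becomes `s² = a₂` and the third `x₁(1 + 2s) = -3a₁x₃²`, which combined with the first
forces `9a₁x₃ = (1 + 2s)²` and hence determines the point. On the critical locus
`f = 2x₁ + x₃ + 2x₄`, which gives the critical value, and `s = x₄/x₃` separates the critical points
of the two square roots of `a₂`.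
-/

namespace ContinuousLinearMap

theorem coprod_eq_zero_iff {R M₁ M₂ M : Type*} [Semiring R] [TopologicalSpace M₁]
    [AddCommMonoid M₁] [Module R M₁] [ContinuousAdd M₁] [TopologicalSpace M₂] [AddCommMonoid M₂]
    [Module R M₂] [ContinuousAdd M₂] [TopologicalSpace M] [AddCommMonoid M] [Module R M]
    [ContinuousAdd M] (f₁ : M₁ →L[R] M) (f₂ : M₂ →L[R] M) :
    f₁.coprod f₂ = 0 ↔ f₁ = 0 ∧ f₂ = 0 :=
  (coprodEquiv (S := ℕ)).map_eq_zero_iff.trans Prod.mk_eq_zero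

theorem toSpanSingleton_eq_zero_iff {R M : Type*} [Semiring R] [TopologicalSpace R]
    [TopologicalSpace M] [AddCommMonoid M] [Module R M] [ContinuousSMul R M] (x : M) :
    toSpanSingleton R x = 0 ↔ x = 0 := by
  rw [← toSpanSingleton_zero R, toSpanSingleton_inj]

section Coeffs

variable {R : Type*} [Semiring R] [TopologicalSpace R] [ContinuousAdd R] [ContinuousMul R]

def ofCoeffs₃ (c : R × R × R) : R × R × R →L[R] R :=
  (toSpanSingleton R c.1).coprod ((toSpanSingleton R c.2.1).coprod (toSpanSingleton R c.2.2))

theorem ofCoeffs₃_apply (c v : R × R × R) :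
    ofCoeffs₃ c v = v.1 * c.1 + (v.2.1 * c.2.1 + v.2.2 * c.2.2) := rfl

theorem ofCoeffs₃_eq_zero_iff (c : R × R × R) : ofCoeffs₃ c = 0 ↔ c = 0 := by
  simp only [ofCoeffs₃, coprod_eq_zero_iff, toSpanSingleton_eq_zero_iff, Prod.ext_iff,
    Prod.fst_zero, Prod.snd_zero]

end Coeffs

end ContinuousLinearMap

open ContinuousLinearMap

theorem ncard_setOf_sq_eq {K : Type*} [Field K] [IsAlgClosed K] [CharZero K] {a : K}
    (ha : a ≠ 0) : {s : K | s ^ 2 = a}.ncard = 2 := by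
  obtain ⟨r, rfl⟩ := IsAlgClosed.exists_pow_nat_eq a two_pos
  have hr : r ≠ 0 := ne_zero_pow two_ne_zero ha
  have hroots : {s : K | s ^ 2 = r ^ 2} = {r, -r} := by
    ext s
    simp [sq_eq_sq_iff_eq_or_eq_neg]
  rw [hroots, Set.ncard_pair (self_ne_neg.mpr hr)]

section GenusTwo

variable (a₁ a₂ : ℂ)

noncomputable def genusTwoGrad (p : ℂ × ℂ × ℂ) : ℂ × ℂ × ℂ :=
  (1 - a₁ * p.2.1 ^ 3 / p.1 ^ 2,
    3 * a₁ * p.2.1 ^ 2 / p.1 + 1 + 2 * a₂ * p.2.1 / p.2.2,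
    1 - a₂ * p.2.1 ^ 2 / p.2.2 ^ 2)

theorem hasFDerivAt_genusTwoW {p : ℂ × ℂ × ℂ} (hx : p.1 ≠ 0) (hz : p.2.2 ≠ 0) :
    HasFDerivAt (genusTwoW a₁ a₂) (ofCoeffs₃ (genusTwoGrad a₁ a₂ p)) p := by
  have hx₁ : HasFDerivAt (fun q : ℂ × ℂ × ℂ => q.1) (fst ℂ ℂ (ℂ × ℂ)) p := hasFDerivAt_fst
  have hx₃ : HasFDerivAt (fun q : ℂ × ℂ × ℂ => q.2.1) ((fst ℂ ℂ ℂ).comp (snd ℂ ℂ (ℂ × ℂ))) p :=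
    hasFDerivAt_fst.comp p hasFDerivAt_snd
  have hx₄ : HasFDerivAt (fun q : ℂ × ℂ × ℂ => q.2.2) ((snd ℂ ℂ ℂ).comp (snd ℂ ℂ (ℂ × ℂ))) p :=
    hasFDerivAt_snd.comp p hasFDerivAt_snd
  have hW := (((hx₁.add (((hx₃.pow 3).const_mul a₁).mul
    ((hasDerivAt_inv hx).comp_hasFDerivAt p hx₁))).add hx₃).add hx₄).add
    (((hx₃.pow 2).const_mul a₂).mul ((hasDerivAt_inv hz).comp_hasFDerivAt p hx₄))
  refine hW.congr_fderiv (ContinuousLinearMap.ext fun v => ?_)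
  simp only [ofCoeffs₃_apply, genusTwoGrad, add_apply, smul_apply, comp_apply, coe_fst',
    coe_snd', smul_eq_mul, Function.comp_apply]
  field_simp
  ring

def GenusTwoCriticalEqs (p : ℂ × ℂ × ℂ) : Prop :=
  p.1 ^ 2 = a₁ * p.2.1 ^ 3 ∧
    3 * a₁ * p.2.1 ^ 2 * p.2.2 + p.1 * p.2.2 + 2 * a₂ * p.1 * p.2.1 = 0 ∧
    p.2.2 ^ 2 = a₂ * p.2.1 ^ 2

theorem genusTwoGrad_eq_zero_iff {p : ℂ × ℂ × ℂ} (hx : p.1 ≠ 0) (hz : p.2.2 ≠ 0) :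
    genusTwoGrad a₁ a₂ p = 0 ↔ GenusTwoCriticalEqs a₁ a₂ p := by
  simp only [genusTwoGrad, GenusTwoCriticalEqs, Prod.mk_eq_zero]
  refine and_congr ?_ (and_congr ?_ ?_)
  · rw [sub_eq_zero, eq_div_iff (pow_ne_zero 2 hx), one_mul, eq_comm]
  · field_simp
    rw [mul_zero]
  · rw [sub_eq_zero, eq_div_iff (pow_ne_zero 2 hz), one_mul, eq_comm]

theorem fderiv_genusTwoW_eq_zero_iff {p : ℂ × ℂ × ℂ} (hx : p.1 ≠ 0) (hz : p.2.2 ≠ 0) :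
    fderiv ℂ (genusTwoW a₁ a₂) p = 0 ↔ GenusTwoCriticalEqs a₁ a₂ p := by
  rw [(hasFDerivAt_genusTwoW a₁ a₂ hx hz).fderiv, ofCoeffs₃_eq_zero_iff,
    genusTwoGrad_eq_zero_iff a₁ a₂ hx hz]

variable {a₁ a₂}

theorem exists_eq_genusTwoCritPt {p : ℂ × ℂ × ℂ} (hx : p.1 ≠ 0) (hy : p.2.1 ≠ 0)
    (hz : p.2.2 ≠ 0) (hp : GenusTwoCriticalEqs a₁ a₂ p) :
    ∃ s : ℂ, s ^ 2 = a₂ ∧ 1 + 2 * s ≠ 0 ∧ p = genusTwoCritPt a₁ s := by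
  obtain ⟨x, y, z⟩ := p
  obtain ⟨h₁, h₂, h₃⟩ := hp
  dsimp only at hx hy hz h₁ h₂ h₃
  have ha₁ : a₁ ≠ 0 := by
    rintro rfl
    exact hx (pow_eq_zero_iff two_ne_zero |>.mp (by simpa using h₁))
  obtain ⟨s, rfl⟩ : ∃ s, z = s * y := ⟨z / y, (div_mul_cancel₀ z hy).symm⟩
  have hs : s ≠ 0 := left_ne_zero_of_mul hz
  have hs₂ : s ^ 2 = a₂ := mul_right_cancel₀ (pow_ne_zero 2 hy) (by linear_combination h₃)
  have hx_lin : x * (1 + 2 * s) = -(3 * a₁ * y ^ 2) :=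
    mul_left_cancel₀ (mul_ne_zero hs hy) (by linear_combination h₂ + 2 * x * y * hs₂)
  have hu : 1 + 2 * s ≠ 0 := fun hu =>
    mul_ne_zero (mul_ne_zero three_ne_zero ha₁) (pow_ne_zero 2 hy)
      (by linear_combination hx_lin - x * hu)
  have hy_sq : 9 * a₁ * y = (1 + 2 * s) ^ 2 :=
    mul_left_cancel₀ (mul_ne_zero ha₁ (pow_ne_zero 3 hy))
      (by linear_combination (3 * a₁ * y ^ 2 - x * (1 + 2 * s)) * hx_lin + (1 + 2 * s) ^ 2 * h₁)
  refine ⟨s, hs₂, hu, ?_⟩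
  simp only [genusTwoCritPt, Prod.mk.injEq]
  refine ⟨?_, ?_, ?_⟩ <;> rw [eq_div_iff (by simpa using ha₁)]
  · exact mul_right_cancel₀ hu
      (by linear_combination 27 * a₁ * hx_lin - ((1 + 2 * s) ^ 2 + 9 * a₁ * y) * hy_sq)
  · linear_combination hy_sq
  · linear_combination s * hy_sq

theorem genusTwoCriticalEqs_genusTwoCritPt (ha₁ : a₁ ≠ 0) {s : ℂ} (hs : s ^ 2 = a₂) :
    GenusTwoCriticalEqs a₁ a₂ (genusTwoCritPt a₁ s) := by
  subst hs
  refine ⟨?_, ?_, ?_⟩ <;> simp only [genusTwoCritPt] <;> field_simp <;> ring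

theorem genusTwoCritPt_mem_torus (ha₁ : a₁ ≠ 0) {s : ℂ} (hs : s ≠ 0) (hu : 1 + 2 * s ≠ 0) :
    (genusTwoCritPt a₁ s).1 ≠ 0 ∧ (genusTwoCritPt a₁ s).2.1 ≠ 0 ∧
      (genusTwoCritPt a₁ s).2.2 ≠ 0 := by
  simp [genusTwoCritPt, ha₁, hs, hu]

theorem genusTwoW_eq_of_sq_eq {p : ℂ × ℂ × ℂ} (h₁ : p.1 ^ 2 = a₁ * p.2.1 ^ 3)
    (h₃ : p.2.2 ^ 2 = a₂ * p.2.1 ^ 2) :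
    genusTwoW a₁ a₂ p = 2 * p.1 + p.2.1 + 2 * p.2.2 := by
  rw [genusTwoW, ← h₁, ← h₃, sq, sq, mul_self_div_self, mul_self_div_self]
  ring

theorem genusTwoW_genusTwoCritPt (ha₁ : a₁ ≠ 0) {s : ℂ} (hs : s ^ 2 = a₂) :
    genusTwoW a₁ a₂ (genusTwoCritPt a₁ s) = (1 + 2 * s) ^ 3 / (27 * a₁) := by
  obtain ⟨h₁, -, h₃⟩ := genusTwoCriticalEqs_genusTwoCritPt ha₁ hs
  rw [genusTwoW_eq_of_sq_eq h₁ h₃]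
  simp only [genusTwoCritPt]
  ring

theorem genusTwoCritPt_injOn (ha₁ : a₁ ≠ 0) :
    Set.InjOn (genusTwoCritPt a₁) {s | 1 + 2 * s ≠ 0} := by
  intro s hs t _ hst
  have hz (r : ℂ) : (genusTwoCritPt a₁ r).2.2 = r * (genusTwoCritPt a₁ r).2.1 := by
    simp only [genusTwoCritPt, mul_div_assoc]
  have hy : (genusTwoCritPt a₁ s).2.1 ≠ 0 := by simp [genusTwoCritPt, ha₁, hs.out]
  refine mul_right_cancel₀ hy ?_
  rw [← hz, hst, hz]

theorem fderiv_genusTwoW_eq_zero_iff_exists (ha₁ : a₁ ≠ 0) {p : ℂ × ℂ × ℂ}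
    (hp : p.1 ≠ 0 ∧ p.2.1 ≠ 0 ∧ p.2.2 ≠ 0) :
    fderiv ℂ (genusTwoW a₁ a₂) p = 0 ↔
      ∃ s : ℂ, s ^ 2 = a₂ ∧ 1 + 2 * s ≠ 0 ∧ p = genusTwoCritPt a₁ s := by
  obtain ⟨hx, hy, hz⟩ := hp
  rw [fderiv_genusTwoW_eq_zero_iff a₁ a₂ hx hz]
  refine ⟨exists_eq_genusTwoCritPt hx hy hz, ?_⟩
  rintro ⟨s, hs, -, rfl⟩
  exact genusTwoCriticalEqs_genusTwoCritPt ha₁ hs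

theorem one_add_two_mul_ne_zero_of_sq_eq {s : ℂ} (hs : s ^ 2 = a₂) (ha₂ : a₂ ≠ 1 / 4) :
    1 + 2 * s ≠ 0 := by
  intro hu
  rw [← hs, show s = -1 / 2 by linear_combination hu / 2] at ha₂
  norm_num at ha₂

theorem setOf_critical_genusTwoW_eq_image (ha₁ : a₁ ≠ 0) (ha₂ : a₂ ≠ 0) (ha₂' : a₂ ≠ 1 / 4) :
    {p : ℂ × ℂ × ℂ | (p.1 ≠ 0 ∧ p.2.1 ≠ 0 ∧ p.2.2 ≠ 0) ∧ fderiv ℂ (genusTwoW a₁ a₂) p = 0} =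
      genusTwoCritPt a₁ '' {s | s ^ 2 = a₂} := by
  ext p
  constructor
  · rintro ⟨hp, hcrit⟩
    obtain ⟨s, hs, -, rfl⟩ := (fderiv_genusTwoW_eq_zero_iff_exists ha₁ hp).mp hcrit
    exact ⟨s, hs, rfl⟩
  · rintro ⟨s, hs, rfl⟩
    have hu := one_add_two_mul_ne_zero_of_sq_eq hs ha₂'
    have hp := genusTwoCritPt_mem_torus ha₁ (ne_zero_pow two_ne_zero (hs ▸ ha₂)) hu
    exact ⟨hp, (fderiv_genusTwoW_eq_zero_iff_exists ha₁ hp).mpr ⟨s, hs, hu, rfl⟩⟩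

end GenusTwo

theorem stmt6 (a₁ a₂ : ℂ) (ha₁ : a₁ ≠ 0) (ha₂ : a₂ ≠ 0) :
    (∀ p ∈ {p : ℂ × ℂ × ℂ | p.1 ≠ 0 ∧ p.2.1 ≠ 0 ∧ p.2.2 ≠ 0},
      (fderiv ℂ (genusTwoW a₁ a₂) p = 0 ↔
        ∃ s : ℂ, s ^ 2 = a₂ ∧ 1 + 2 * s ≠ 0 ∧ p = genusTwoCritPt a₁ s)) ∧
    (∀ s : ℂ, s ^ 2 = a₂ → 1 + 2 * s ≠ 0 →
      genusTwoW a₁ a₂ (genusTwoCritPt a₁ s) = (1 + 2 * s) ^ 3 / (27 * a₁)) ∧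
    (a₂ ≠ 1/4 →
      {p : ℂ × ℂ × ℂ | (p.1 ≠ 0 ∧ p.2.1 ≠ 0 ∧ p.2.2 ≠ 0) ∧
          fderiv ℂ (genusTwoW a₁ a₂) p = 0}.ncard = 2 ∧
      (genusTwoW a₁ a₂) ''
          {p : ℂ × ℂ × ℂ | (p.1 ≠ 0 ∧ p.2.1 ≠ 0 ∧ p.2.2 ≠ 0) ∧
            fderiv ℂ (genusTwoW a₁ a₂) p = 0}
        = {v : ℂ | ∃ s : ℂ, s ^ 2 = a₂ ∧ v = (1 / a₁) * ((1 + 2 * s) / 3) ^ 3}) := by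
  refine ⟨fun p hp => fderiv_genusTwoW_eq_zero_iff_exists ha₁ hp,
    fun s hs _ => genusTwoW_genusTwoCritPt ha₁ hs, fun ha₂' => ?_⟩
  rw [setOf_critical_genusTwoW_eq_image ha₁ ha₂ ha₂']
  constructor
  · have hinj : Set.InjOn (genusTwoCritPt a₁) {s | s ^ 2 = a₂} :=
      (genusTwoCritPt_injOn ha₁).mono fun s hs => one_add_two_mul_ne_zero_of_sq_eq hs ha₂'
    rw [hinj.ncard_image, ncard_setOf_sq_eq ha₂]
  · ext v
    simp only [Set.image_image, Set.mem_image, Set.mem_ofPred_eq]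
    refine exists_congr fun s => and_congr_right fun hs => ?_
    rw [genusTwoW_genusTwoCritPt ha₁ hs, eq_comm]
    ring_nf
end

section
/- Let $k\ge 3$ be an integer, let $a_1,a_2$ be nonzero complex numbers, and define $f_k(x_1,x_3,x_4)=x_1+\tfrac{a_1x_3^k}{x_1}+x_3+x_4+\tfrac{a_2x_3^2}{x_4}$ on $(\mathbb{C}^\times)^3$. If $(x_1,x_3,x_4)$ is a critical point of $f_k$, then there exists $s\in\mathbb{C}$ with $s^2=a_2$ such that $x_4=sx_3$, $x_3+kx_1+2x_4=0$, $f_k(x_1,x_3,x_4)=-(k-2)x_1$, and $\left(f_k(x_1,x_3,x_4)\right)^{k-2}=\tfrac{(k-2)^{k-2}(1+2s)^k}{k^k\,a_1}$. Moreover, the set of critical points of $f_k$ is finite with at most $2(k-2)$ elements. -/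
/-- The superpotential of the affine Hori–Vafa mirror of a hyperelliptic curve of
genus `k-1`, in the coordinates `(x₁, x₃, x₄)` of `(ℂ*)³`. -/
noncomputable def hyperellW (k : ℕ) (a₁ a₂ : ℂ) (p : ℂ × ℂ × ℂ) : ℂ :=
  p.1 + a₁ * p.2.1 ^ k / p.1 + p.2.1 + p.2.2 + a₂ * p.2.1 ^ 2 / p.2.2

/-! At a critical point the partial derivatives in `x₁` and `x₄` give `x₁² = a₁ x₃ᵏ` and
`x₄² = a₂ x₃²`, and `x₃ ∂f/∂x₃ = 0` then reads `x₃ + k x₁ + 2 x₄ = 0`. So `s = x₄ / x₃` is a square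
root of `a₂`, `f = 2 x₁ + x₃ + 2 x₄ = -(k - 2) x₁`, and substituting `(1 + 2 s) x₃ = -k x₁` into
`x₁² = a₁ x₃ᵏ` gives `x₁ᵏ⁻² (-k)ᵏ a₁ = (1 + 2 s)ᵏ`. A critical point is thus determined by one of
two square roots `s` and one of at most `k - 2` roots `x₁`. -/

open Polynomial Finset

theorem HasDerivAt.eq_zero_of_fderiv_eq_zero {𝕜 E : Type*} [NontriviallyNormedField 𝕜]
    [NormedAddCommGroup E] [NormedSpace 𝕜 E] {f : E → 𝕜} {g : 𝕜 → E} {g' : E} {t d : 𝕜}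
    (hf : DifferentiableAt 𝕜 f (g t)) (hcrit : fderiv 𝕜 f (g t) = 0) (hg : HasDerivAt g g' t)
    (hd : HasDerivAt (fun s ↦ f (g s)) d t) : d = 0 := by
  have h := hf.hasFDerivAt.comp_hasDerivAt t hg
  rw [hcrit, zero_apply] at h
  exact hd.unique h

theorem Polynomial.card_nthRootsFinset_le {R : Type*} [CommRing R] [IsDomain R] (n : ℕ) (a : R) :
    #(nthRootsFinset n a) ≤ n := by
  classical
  rw [nthRootsFinset_def]
  exact (Multiset.toFinset_card_le _).trans (card_nthRoots n a)

theorem Set.finite_ncard_le_of_forall_exists_pow_eq {R α : Type*} [CommRing R] [IsDomain R]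
    {S : Set α} {m n : ℕ} (hm : 0 < m) (hn : 0 < n) (a : R) (c : R → R) (φ : R → R → α)
    (hS : ∀ p ∈ S, ∃ s x, s ^ m = a ∧ x ^ n = c s ∧ φ s x = p) :
    S.Finite ∧ S.ncard ≤ m * n := by
  classical
  set T := (nthRootsFinset m a).biUnion fun s ↦ (nthRootsFinset n (c s)).image (φ s)
  have hST : S ⊆ T := by
    intro p hp
    obtain ⟨s, x, hs, hx, rfl⟩ := hS p hp
    simp only [T, Finset.coe_biUnion, Finset.coe_image, Set.mem_iUnion, Set.mem_image]
    exact ⟨s, (mem_nthRootsFinset hm a).2 hs, x, (mem_nthRootsFinset hn _).2 hx, rfl⟩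
  refine ⟨T.finite_toSet.subset hST, ?_⟩
  calc S.ncard ≤ #T := by simpa using Set.ncard_le_ncard hST T.finite_toSet
    _ ≤ #(nthRootsFinset m a) * n := Finset.card_biUnion_le_card_mul _ _ _ fun s _ ↦
        Finset.card_image_le.trans (card_nthRootsFinset_le n _)
    _ ≤ m * n := Nat.mul_le_mul_right n (card_nthRootsFinset_le m a)

theorem eq_neg_mul_div_of_add_mul_add_two_mul_eq_zero {c x y s : ℂ} (hc : c ≠ 0) (hx : x ≠ 0)
    (h : y + c * x + 2 * (s * y) = 0) : y = -c * x / (1 + 2 * s) := by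
  have hlin : (1 + 2 * s) * y = -c * x := by linear_combination h
  have hs : 1 + 2 * s ≠ 0 := by
    rintro hs
    rw [hs, zero_mul, eq_comm, neg_mul, neg_eq_zero] at hlin
    exact mul_ne_zero hc hx hlin
  rw [eq_div_iff hs]
  linear_combination h

section

variable {k : ℕ} {a₁ a₂ x₁ x₃ x₄ : ℂ}

theorem differentiableAt_hyperellW (hx₁ : x₁ ≠ 0) (hx₄ : x₄ ≠ 0) :
    DifferentiableAt ℂ (hyperellW k a₁ a₂) (x₁, x₃, x₄) := by
  unfold hyperellW
  fun_prop (disch := assumption)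

theorem hasDerivAt_hyperellW_fst (hx₁ : x₁ ≠ 0) :
    HasDerivAt (fun t ↦ hyperellW k a₁ a₂ (t, x₃, x₄)) (1 - a₁ * x₃ ^ k / x₁ ^ 2) x₁ := by
  refine (((((hasDerivAt_id' x₁).add ((hasDerivAt_const x₁ (a₁ * x₃ ^ k)).div
    (hasDerivAt_id' x₁) hx₁)).add_const x₃).add_const x₄).add_const
      (a₂ * x₃ ^ 2 / x₄)).congr_deriv ?_
  ring

theorem hasDerivAt_hyperellW_snd :
    HasDerivAt (fun t ↦ hyperellW k a₁ a₂ (x₁, t, x₄))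
      (k * a₁ * x₃ ^ (k - 1) / x₁ + 1 + 2 * a₂ * x₃ / x₄) x₃ := by
  refine (((((hasDerivAt_pow k x₃).const_mul a₁).div_const x₁).const_add x₁ |>.add
    (hasDerivAt_id' x₃) |>.add_const x₄).add
      (((hasDerivAt_pow 2 x₃).const_mul a₂).div_const x₄)).congr_deriv ?_
  ring

theorem hasDerivAt_hyperellW_snd_snd (hx₄ : x₄ ≠ 0) :
    HasDerivAt (fun t ↦ hyperellW k a₁ a₂ (x₁, x₃, t)) (1 - a₂ * x₃ ^ 2 / x₄ ^ 2) x₄ := by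
  refine (((hasDerivAt_id' x₄).const_add (x₁ + a₁ * x₃ ^ k / x₁ + x₃)).add
    ((hasDerivAt_const x₄ (a₂ * x₃ ^ 2)).div (hasDerivAt_id' x₄) hx₄)).congr_deriv ?_
  ring

theorem critical_equations_of_fderiv_hyperellW_eq_zero (hx₁ : x₁ ≠ 0) (hx₄ : x₄ ≠ 0)
    (hcrit : fderiv ℂ (hyperellW k a₁ a₂) (x₁, x₃, x₄) = 0) :
    x₁ ^ 2 = a₁ * x₃ ^ k ∧ x₄ ^ 2 = a₂ * x₃ ^ 2 ∧ x₃ + k * x₁ + 2 * x₄ = 0 := by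
  have hW : DifferentiableAt ℂ (hyperellW k a₁ a₂) (x₁, x₃, x₄) :=
    differentiableAt_hyperellW hx₁ hx₄
  have d₁ := HasDerivAt.eq_zero_of_fderiv_eq_zero hW hcrit
    ((hasDerivAt_id' x₁).prodMk (hasDerivAt_const _ _)) (hasDerivAt_hyperellW_fst hx₁)
  have d₃ := HasDerivAt.eq_zero_of_fderiv_eq_zero hW hcrit
    ((hasDerivAt_const _ _).prodMk ((hasDerivAt_id' x₃).prodMk (hasDerivAt_const _ _)))
    hasDerivAt_hyperellW_snd
  have d₄ := HasDerivAt.eq_zero_of_fderiv_eq_zero hW hcrit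
    ((hasDerivAt_const _ _).prodMk ((hasDerivAt_const _ _).prodMk (hasDerivAt_id' x₄)))
    (hasDerivAt_hyperellW_snd_snd hx₄)
  have hpow : (k : ℂ) * x₃ ^ (k - 1) * x₃ = k * x₃ ^ k := by
    rcases k with _ | k
    · simp
    · rw [Nat.add_sub_cancel, mul_assoc, ← pow_succ]
  field_simp at d₁ d₃ d₄
  refine ⟨by linear_combination d₁, by linear_combination d₄, ?_⟩
  apply mul_left_cancel₀ (mul_ne_zero hx₁ hx₄)
  linear_combination x₃ * d₃ - a₁ * x₄ * hpow + k * x₄ * d₁ + 2 * x₁ * d₄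

theorem hyperellW_eq_of_critical_equations (hx₁ : x₁ ≠ 0) (hx₄ : x₄ ≠ 0)
    (e₁ : x₁ ^ 2 = a₁ * x₃ ^ k) (e₄ : x₄ ^ 2 = a₂ * x₃ ^ 2) (e₃ : x₃ + k * x₁ + 2 * x₄ = 0) :
    hyperellW k a₁ a₂ (x₁, x₃, x₄) = -((k : ℂ) - 2) * x₁ := by
  unfold hyperellW
  rw [← e₁, ← e₄, sq, sq, mul_div_cancel_right₀ _ hx₁, mul_div_cancel_right₀ _ hx₄]
  linear_combination e₃

theorem pow_sub_two_mul_eq_of_critical_equations {s : ℂ} (hk : 2 ≤ k) (hx₁ : x₁ ≠ 0)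
    (e₁ : x₁ ^ 2 = a₁ * x₃ ^ k) (e₃ : x₃ + k * x₁ + 2 * x₄ = 0) (hs : x₄ = s * x₃) :
    x₁ ^ (k - 2) * ((-k) ^ k * a₁) = (1 + 2 * s) ^ k := by
  obtain ⟨n, rfl⟩ := Nat.exists_eq_add_of_le' hk
  have hlin : (1 + 2 * s) * x₃ = -(n + 2 : ℕ) * x₁ := by linear_combination e₃ - 2 * hs
  apply mul_right_cancel₀ (pow_ne_zero 2 hx₁)
  rw [Nat.add_sub_cancel]
  have hpow : (1 + 2 * s) ^ (n + 2) * x₃ ^ (n + 2) = (-(n + 2 : ℕ)) ^ (n + 2) * x₁ ^ (n + 2) := by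
    rw [← mul_pow, hlin, mul_pow]
  linear_combination -(1 + 2 * s) ^ (n + 2) * e₁ - a₁ * hpow

theorem pow_sub_two_eq_of_pow_sub_two_mul_eq {c x : ℂ} (hk : 2 ≤ k) (ha₁ : a₁ ≠ 0)
    (h : x ^ (k - 2) * ((-k) ^ k * a₁) = c) :
    (-((k : ℂ) - 2) * x) ^ (k - 2) = ((k : ℂ) - 2) ^ (k - 2) * c / ((k : ℂ) ^ k * a₁) := by
  obtain ⟨n, rfl⟩ := Nat.exists_eq_add_of_le' hk
  have hn : ((n + 2 : ℕ) : ℂ) ≠ 0 := Nat.cast_ne_zero.2 (by omega)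
  rw [← h, Nat.add_sub_cancel, neg_pow ((n + 2 : ℕ) : ℂ), neg_mul, neg_pow, mul_pow]
  field_simp
  ring

theorem exists_sq_eq_of_fderiv_hyperellW_eq_zero (hk : 2 ≤ k) (hx₁ : x₁ ≠ 0) (hx₃ : x₃ ≠ 0)
    (hx₄ : x₄ ≠ 0) (hcrit : fderiv ℂ (hyperellW k a₁ a₂) (x₁, x₃, x₄) = 0) :
    ∃ s : ℂ, s ^ 2 = a₂ ∧ x₄ = s * x₃ ∧ x₃ + k * x₁ + 2 * x₄ = 0 ∧
      hyperellW k a₁ a₂ (x₁, x₃, x₄) = -((k : ℂ) - 2) * x₁ ∧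
      x₁ ^ (k - 2) * ((-k) ^ k * a₁) = (1 + 2 * s) ^ k := by
  obtain ⟨e₁, e₄, e₃⟩ := critical_equations_of_fderiv_hyperellW_eq_zero hx₁ hx₄ hcrit
  have hs : x₄ = x₄ / x₃ * x₃ := (div_mul_cancel₀ x₄ hx₃).symm
  refine ⟨x₄ / x₃, ?_, hs, e₃, hyperellW_eq_of_critical_equations hx₁ hx₄ e₁ e₄ e₃,
    pow_sub_two_mul_eq_of_critical_equations hk hx₁ e₁ e₃ hs⟩
  rw [div_pow, e₄, mul_div_cancel_right₀ _ (pow_ne_zero 2 hx₃)]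

end

theorem stmt7_general (k : ℕ) (hk : 3 ≤ k) (a₁ a₂ : ℂ) (ha₁ : a₁ ≠ 0) :
    (∀ p ∈ {p : ℂ × ℂ × ℂ | p.1 ≠ 0 ∧ p.2.1 ≠ 0 ∧ p.2.2 ≠ 0},
      fderiv ℂ (hyperellW k a₁ a₂) p = 0 →
        ∃ s : ℂ, s ^ 2 = a₂ ∧ p.2.2 = s * p.2.1 ∧
          p.2.1 + (k : ℂ) * p.1 + 2 * p.2.2 = 0 ∧
          hyperellW k a₁ a₂ p = -((k : ℂ) - 2) * p.1 ∧
          (hyperellW k a₁ a₂ p) ^ (k - 2)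
            = ((k : ℂ) - 2) ^ (k - 2) * (1 + 2 * s) ^ k / ((k : ℂ) ^ k * a₁)) ∧
    {p : ℂ × ℂ × ℂ | (p.1 ≠ 0 ∧ p.2.1 ≠ 0 ∧ p.2.2 ≠ 0) ∧
        fderiv ℂ (hyperellW k a₁ a₂) p = 0}.Finite ∧
    {p : ℂ × ℂ × ℂ | (p.1 ≠ 0 ∧ p.2.1 ≠ 0 ∧ p.2.2 ≠ 0) ∧
        fderiv ℂ (hyperellW k a₁ a₂) p = 0}.ncard ≤ 2 * (k - 2) := by
  have hk₂ : 2 ≤ k := by omega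
  have hk₀ : (k : ℂ) ≠ 0 := Nat.cast_ne_zero.2 (by omega)
  refine ⟨?_, ?_⟩
  · rintro ⟨x₁, x₃, x₄⟩ ⟨hx₁, hx₃, hx₄⟩ hcrit
    obtain ⟨s, hs, hx₄s, e₃, hW, hpow⟩ :=
      exists_sq_eq_of_fderiv_hyperellW_eq_zero hk₂ hx₁ hx₃ hx₄ hcrit
    refine ⟨s, hs, hx₄s, e₃, hW, ?_⟩
    rw [hW]
    exact pow_sub_two_eq_of_pow_sub_two_mul_eq hk₂ ha₁ hpow
  · refine Set.finite_ncard_le_of_forall_exists_pow_eq two_pos (by omega) a₂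
      (fun s ↦ (1 + 2 * s) ^ k / ((-k) ^ k * a₁))
      (fun s x ↦ (x, -k * x / (1 + 2 * s), s * (-k * x / (1 + 2 * s)))) ?_
    rintro ⟨x₁, x₃, x₄⟩ ⟨⟨hx₁, hx₃, hx₄⟩, hcrit⟩
    dsimp only at hx₁ hx₃ hx₄
    obtain ⟨s, hs, rfl, e₃, -, hpow⟩ :=
      exists_sq_eq_of_fderiv_hyperellW_eq_zero hk₂ hx₁ hx₃ hx₄ hcrit
    refine ⟨s, x₁, hs, eq_div_of_mul_eq (by simp [hk₀, ha₁]) hpow, ?_⟩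
    rw [eq_neg_mul_div_of_add_mul_add_two_mul_eq_zero hk₀ hx₁ e₃]

theorem stmt7 (k : ℕ) (hk : 3 ≤ k) (a₁ a₂ : ℂ) (ha₁ : a₁ ≠ 0) (ha₂ : a₂ ≠ 0) :
    (∀ p ∈ {p : ℂ × ℂ × ℂ | p.1 ≠ 0 ∧ p.2.1 ≠ 0 ∧ p.2.2 ≠ 0},
      fderiv ℂ (hyperellW k a₁ a₂) p = 0 →
        ∃ s : ℂ, s ^ 2 = a₂ ∧ p.2.2 = s * p.2.1 ∧
          p.2.1 + (k : ℂ) * p.1 + 2 * p.2.2 = 0 ∧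
          hyperellW k a₁ a₂ p = -((k : ℂ) - 2) * p.1 ∧
          (hyperellW k a₁ a₂ p) ^ (k - 2)
            = ((k : ℂ) - 2) ^ (k - 2) * (1 + 2 * s) ^ k / ((k : ℂ) ^ k * a₁)) ∧
    {p : ℂ × ℂ × ℂ | (p.1 ≠ 0 ∧ p.2.1 ≠ 0 ∧ p.2.2 ≠ 0) ∧
        fderiv ℂ (hyperellW k a₁ a₂) p = 0}.Finite ∧
    {p : ℂ × ℂ × ℂ | (p.1 ≠ 0 ∧ p.2.1 ≠ 0 ∧ p.2.2 ≠ 0) ∧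
        fderiv ℂ (hyperellW k a₁ a₂) p = 0}.ncard ≤ 2 * (k - 2) :=
  stmt7_general k hk a₁ a₂ ha₁
end

section
/- Define the polynomial $F=x_1(x_0-x_1)\,y_1(y_0-y_1)\,z_1(wz_0-z_1)-x_0^2y_0^2z_0^2$ in the seven variables $(x_0,x_1,y_0,y_1,z_0,z_1,w)$. Then $F$ and all seven of its first-order partial derivatives vanish at every point of the following fourteen families: $(0,1,1,0,1,0,w)$, $(0,1,1,0,1,w,w)$, $(0,1,1,1,1,0,w)$, $(0,1,1,1,1,w,w)$, $(1,0,0,1,1,0,w)$, $(1,0,0,1,1,w,w)$, $(1,1,0,1,1,0,w)$, $(1,1,0,1,1,w,w)$, $(1,0,1,0,0,1,w)$, $(1,0,1,1,0,1,w)$, $(1,1,1,0,0,1,w)$, $(1,1,1,1,0,1,w)$ for all $w\in\mathbb{C}$, together with $(0,1,y_0,y_1,1,0,0)$ for all $(y_0,y_1)\in\mathbb{C}^2$ and $(x_0,x_1,0,1,1,0,0)$ for all $(x_0,x_1)\in\mathbb{C}^2$. -/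
/-!
`F` is a product of six factors minus the square `(x₀ y₀ z₀)²`. At every listed point two of
the six factors vanish and so does `x₀ y₀ z₀`; a product with two vanishing factors, like a square
of a vanishing function, vanishes to second order, so `F` and its differential vanish there.
-/

/-- Defining equation of the compactified mirror of the intersection of two
quadrics in `ℙ⁵`, in the variables `(x₀, x₁, y₀, y₁, z₀, z₁, w)`. -/
def quadricsF (v : Fin 7 → ℂ) : ℂ :=
  v 1 * (v 0 - v 1) * v 3 * (v 2 - v 3) * v 5 * (v 6 * v 4 - v 5) -
    v 0 ^ 2 * v 2 ^ 2 * v 4 ^ 2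

/-- `p` is a singular point of the hypersurface `F = 0`: both `F` and all its
first-order partial derivatives vanish at `p`. -/
def IsSingPt (F : (Fin 7 → ℂ) → ℂ) (p : Fin 7 → ℂ) : Prop :=
  F p = 0 ∧ ∀ i : Fin 7, fderiv ℂ F p (Pi.single i 1) = 0

open Finset

section VanishingToSecondOrder

variable {𝕜 E 𝔸 : Type*} [NontriviallyNormedField 𝕜] [NormedAddCommGroup E] [NormedSpace 𝕜 E]
  [NormedCommRing 𝔸] [NormedAlgebra 𝕜 𝔸] {p : E}

theorem HasFDerivAt.finsetProd_of_two_eq_zero {ι : Type*} [DecidableEq ι] {u : Finset ι}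
    {f : ι → E → 𝔸} {f' : ι → E →L[𝕜] 𝔸} (hf : ∀ k ∈ u, HasFDerivAt (f k) (f' k) p)
    {i j : ι} (hi : i ∈ u) (hj : j ∈ u) (hij : i ≠ j) (hfi : f i p = 0) (hfj : f j p = 0) :
    HasFDerivAt (fun x => ∏ k ∈ u, f k x) (0 : E →L[𝕜] 𝔸) p := by
  convert HasFDerivAt.finsetProd hf
  refine (sum_eq_zero fun k _ => ?_).symm
  obtain ⟨l, hl, hlk, hfl⟩ : ∃ l ∈ u, l ≠ k ∧ f l p = 0 := by
    obtain rfl | hki := eq_or_ne k i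
    exacts [⟨j, hj, hij.symm, hfj⟩, ⟨i, hi, hki.symm, hfi⟩]
  ext x
  rw [smul_apply, prod_eq_zero (mem_erase.2 ⟨hlk, hl⟩) hfl, zero_smul, zero_apply]

theorem HasFDerivAt.pow_of_eq_zero {f : E → 𝔸} {f' : E →L[𝕜] 𝔸} (hf : HasFDerivAt f f' p)
    (hfp : f p = 0) {n : ℕ} (hn : 2 ≤ n) :
    HasFDerivAt (fun x => f x ^ n) (0 : E →L[𝕜] 𝔸) p := by
  convert hf.pow n
  ext x
  simp [hfp, zero_pow (by omega : n - 1 ≠ 0)]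

end VanishingToSecondOrder

theorem isSingPt_of_hasFDerivAt_zero {F : (Fin 7 → ℂ) → ℂ} {p : Fin 7 → ℂ} (hFp : F p = 0)
    (hF : HasFDerivAt F (0 : (Fin 7 → ℂ) →L[ℂ] ℂ) p) : IsSingPt F p :=
  ⟨hFp, fun i => by rw [hF.fderiv, zero_apply]⟩

def quadricsFactor : Fin 6 → (Fin 7 → ℂ) → ℂ :=
  ![fun v => v 1, fun v => v 0 - v 1, fun v => v 3, fun v => v 2 - v 3,
    fun v => v 5, fun v => v 6 * v 4 - v 5]

theorem differentiable_quadricsFactor (k : Fin 6) : Differentiable ℂ (quadricsFactor k) := by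
  fin_cases k <;> simp only [quadricsFactor, Fin.zero_eta, Fin.mk_one, Fin.reduceFinMk,
    Matrix.cons_val_zero, Matrix.cons_val_one, Matrix.cons_val] <;> fun_prop

theorem quadricsF_eq_prod_sub_sq :
    quadricsF = fun v => ∏ k, quadricsFactor k v - (v 0 * v 2 * v 4) ^ 2 := by
  funext v
  rw [Fin.prod_univ_six]
  simp only [quadricsF, quadricsFactor, Matrix.cons_val]
  ring

theorem isSingPt_quadricsF {p : Fin 7 → ℂ} (i j : Fin 6) (hij : i ≠ j)
    (hi : quadricsFactor i p = 0) (hj : quadricsFactor j p = 0) (hxyz : p 0 * p 2 * p 4 = 0) :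
    IsSingPt quadricsF p := by
  rw [quadricsF_eq_prod_sub_sq]
  have hprod := HasFDerivAt.finsetProd_of_two_eq_zero
    (fun k _ => (differentiable_quadricsFactor k p).hasFDerivAt) (mem_univ i) (mem_univ j) hij hi hj
  have hsq := HasFDerivAt.pow_of_eq_zero
    (by fun_prop : DifferentiableAt ℂ (fun v : Fin 7 → ℂ => v 0 * v 2 * v 4) p).hasFDerivAt
    hxyz le_rfl
  refine isSingPt_of_hasFDerivAt_zero ?_ ((hprod.sub hsq).congr_fderiv (sub_zero _))
  rw [prod_eq_zero (f := (quadricsFactor · p)) (mem_univ i) hi, hxyz, zero_pow two_ne_zero, sub_zero]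

theorem stmt9 :
    (∀ w : ℂ,
      ∀ p ∈ ({![0, 1, 1, 0, 1, 0, w], ![0, 1, 1, 0, 1, w, w],
              ![0, 1, 1, 1, 1, 0, w], ![0, 1, 1, 1, 1, w, w],
              ![1, 0, 0, 1, 1, 0, w], ![1, 0, 0, 1, 1, w, w],
              ![1, 1, 0, 1, 1, 0, w], ![1, 1, 0, 1, 1, w, w],
              ![1, 0, 1, 0, 0, 1, w], ![1, 0, 1, 1, 0, 1, w],
              ![1, 1, 1, 0, 0, 1, w], ![1, 1, 1, 1, 0, 1, w]} :
          Set (Fin 7 → ℂ)),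
        IsSingPt quadricsF p) ∧
    (∀ y₀ y₁ : ℂ, IsSingPt quadricsF ![0, 1, y₀, y₁, 1, 0, 0]) ∧
    (∀ x₀ x₁ : ℂ, IsSingPt quadricsF ![x₀, x₁, 0, 1, 1, 0, 0]) := by
  refine ⟨fun w p hp => ?_, fun y₀ y₁ => ?_, fun x₀ x₁ => ?_⟩
  · simp only [Set.mem_insert_iff, Set.mem_singleton_iff] at hp
    rcases hp with rfl | rfl | rfl | rfl | rfl | rfl | rfl | rfl | rfl | rfl | rfl | rfl <;>
    [apply isSingPt_quadricsF 2 4; apply isSingPt_quadricsF 2 5;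
      apply isSingPt_quadricsF 3 4; apply isSingPt_quadricsF 3 5;
      apply isSingPt_quadricsF 0 4; apply isSingPt_quadricsF 0 5;
      apply isSingPt_quadricsF 1 4; apply isSingPt_quadricsF 1 5;
      apply isSingPt_quadricsF 0 2; apply isSingPt_quadricsF 0 3;
      apply isSingPt_quadricsF 1 2; apply isSingPt_quadricsF 1 3] <;>
    simp [quadricsFactor]
  all_goals apply isSingPt_quadricsF 4 5 <;> simp [quadricsFactor]
end

section
/- Define $g(x_1,x_3,x_5)=x_5+\tfrac{1}{x_1(1+x_1)x_3(1+x_3)x_5}$ on the open set $\{(x_1,x_3,x_5)\in\mathbb{C}^3 : x_1(1+x_1)x_3(1+x_3)x_5\neq 0\}$. Then $g$ has exactly two critical points, namely $(-1/2,-1/2,4)$ and $(-1/2,-1/2,-4)$, with critical values $g(-1/2,-1/2,4)=8$ and $g(-1/2,-1/2,-4)=-8$. -/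
/-!
With `u t = t * (1 + t)`, the function is `c + 1 / (u a * u b * c)`. Its `a`- and `b`-partials
are multiples of `u' a = 1 + 2 * a` and `u' b = 1 + 2 * b`, so a critical point has
`a = b = -1/2`, where `u = -1/4`; the `c`-partial `1 - 1 / (u a * u b * c ^ 2)` then vanishes
exactly when `c ^ 2 = 16`.
-/

/-- The superpotential of the affine Hori–Vafa mirror of the degree four Fano
threefold `X₄`, in the coordinates `(x₁, x₃, x₅)`. -/
noncomputable def fanoW (p : ℂ × ℂ × ℂ) : ℂ :=
  p.2.2 + 1 / (p.1 * (1 + p.1) * p.2.1 * (1 + p.2.1) * p.2.2)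

namespace ContinuousLinearMap

variable {𝕜 F : Type*} [NontriviallyNormedField 𝕜] [NormedAddCommGroup F] [NormedSpace 𝕜 F]

theorem eq_zero_iff_apply_basis₃ (L : 𝕜 × 𝕜 × 𝕜 →L[𝕜] F) :
    L = 0 ↔ L (1, 0, 0) = 0 ∧ L (0, 1, 0) = 0 ∧ L (0, 0, 1) = 0 := by
  simp only [prod_ext_iff, ContinuousLinearMap.ext_ring_iff]
  rfl

end ContinuousLinearMap

namespace HasFDerivAt

variable {𝕜 F : Type*} [NontriviallyNormedField 𝕜] [NormedAddCommGroup F] [NormedSpace 𝕜 F]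
  {f : 𝕜 × 𝕜 × 𝕜 → F} {f' : 𝕜 × 𝕜 × 𝕜 →L[𝕜] F} {a b c : 𝕜}

theorem hasDerivAt_partial₁ (hf : HasFDerivAt f f' (a, b, c)) :
    HasDerivAt (fun t ↦ f (t, b, c)) (f' (1, 0, 0)) a :=
  hf.comp_hasDerivAt a <|
    (hasDerivAt_id a).prodMk ((hasDerivAt_const a b).prodMk (hasDerivAt_const a c))

theorem hasDerivAt_partial₂ (hf : HasFDerivAt f f' (a, b, c)) :
    HasDerivAt (fun t ↦ f (a, t, c)) (f' (0, 1, 0)) b :=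
  hf.comp_hasDerivAt b <|
    (hasDerivAt_const b a).prodMk ((hasDerivAt_id b).prodMk (hasDerivAt_const b c))

theorem hasDerivAt_partial₃ (hf : HasFDerivAt f f' (a, b, c)) :
    HasDerivAt (fun t ↦ f (a, b, t)) (f' (0, 0, 1)) c :=
  hf.comp_hasDerivAt c <|
    (hasDerivAt_const c a).prodMk ((hasDerivAt_const c b).prodMk (hasDerivAt_id c))

end HasFDerivAt

section fanoW

variable {a b c : ℂ}

theorem fanoW_swap (a b c : ℂ) : fanoW (a, b, c) = fanoW (b, a, c) := by
  simp only [fanoW]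
  congr 2
  ring

theorem differentiableAt_fanoW (hD : a * (1 + a) * b * (1 + b) * c ≠ 0) :
    DifferentiableAt ℂ fanoW (a, b, c) := by
  unfold fanoW
  fun_prop (disch := exact hD)

theorem hasDerivAt_fanoW_partial₁ (hD : a * (1 + a) * b * (1 + b) * c ≠ 0) :
    HasDerivAt (fun t ↦ fanoW (t, b, c))
      (-(1 + 2 * a) * (b * (1 + b) * c) / (a * (1 + a) * b * (1 + b) * c) ^ 2) a := by
  have hden : HasDerivAt (fun t ↦ t * (1 + t) * b * (1 + b) * c)
      ((1 + 2 * a) * (b * (1 + b) * c)) a := by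
    refine ((((hasDerivAt_id' a).mul ((hasDerivAt_id' a).const_add 1)).mul_const b
      |>.mul_const (1 + b)).mul_const c).congr_deriv ?_
    ring
  have hfun : (fun t ↦ fanoW (t, b, c)) = fun t ↦ c + (t * (1 + t) * b * (1 + b) * c)⁻¹ := by
    funext t
    simp only [fanoW, one_div]
  rw [hfun]
  exact ((hden.inv hD).const_add c).congr_deriv (by ring)

theorem hasDerivAt_fanoW_partial₂ (hD : a * (1 + a) * b * (1 + b) * c ≠ 0) :
    HasDerivAt (fun t ↦ fanoW (a, t, c))
      (-(1 + 2 * b) * (a * (1 + a) * c) / (b * (1 + b) * a * (1 + a) * c) ^ 2) b := by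
  simp only [fanoW_swap a]
  exact hasDerivAt_fanoW_partial₁ (by convert hD using 1; ring)

theorem hasDerivAt_fanoW_partial₃ (hD : a * (1 + a) * b * (1 + b) * c ≠ 0) :
    HasDerivAt (fun t ↦ fanoW (a, b, t))
      (1 - a * (1 + a) * b * (1 + b) / (a * (1 + a) * b * (1 + b) * c) ^ 2) c := by
  have hfun : (fun t ↦ fanoW (a, b, t)) = fun t ↦ t + (a * (1 + a) * b * (1 + b) * t)⁻¹ := by
    funext t
    simp only [fanoW, one_div]
  rw [hfun]
  refine ((hasDerivAt_id' c).add
    (((hasDerivAt_id' c).const_mul (a * (1 + a) * b * (1 + b))).inv hD)).congr_deriv ?_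
  ring

theorem fderiv_fanoW_eq_zero_iff (hD : a * (1 + a) * b * (1 + b) * c ≠ 0) :
    fderiv ℂ fanoW (a, b, c) = 0 ↔
      1 + 2 * a = 0 ∧ 1 + 2 * b = 0 ∧ a * (1 + a) * b * (1 + b) * c ^ 2 = 1 := by
  have hf := (differentiableAt_fanoW hD).hasFDerivAt
  rw [ContinuousLinearMap.eq_zero_iff_apply_basis₃,
    hf.hasDerivAt_partial₁.unique (hasDerivAt_fanoW_partial₁ hD),
    hf.hasDerivAt_partial₂.unique (hasDerivAt_fanoW_partial₂ hD),
    hf.hasDerivAt_partial₃.unique (hasDerivAt_fanoW_partial₃ hD)]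
  simp only [mul_ne_zero_iff] at hD
  obtain ⟨⟨⟨⟨ha, ha'⟩, hb⟩, hb'⟩, hc⟩ := hD
  refine and_congr ?_ (and_congr ?_ ?_) <;> field_simp <;> rw [mul_zero]
  exacts [neg_eq_zero, neg_eq_zero, sub_eq_zero]

theorem fanoW_critical_equations_iff :
    (1 + 2 * a = 0 ∧ 1 + 2 * b = 0 ∧ a * (1 + a) * b * (1 + b) * c ^ 2 = 1) ↔
      a = -1/2 ∧ b = -1/2 ∧ (c = 4 ∨ c = -4) := by
  constructor
  · rintro ⟨ha, hb, hc⟩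
    obtain rfl : a = -1/2 := by linear_combination ha / 2
    obtain rfl : b = -1/2 := by linear_combination hb / 2
    have hc' : (c - 4) * (c + 4) = 0 := by linear_combination 16 * hc
    refine ⟨rfl, rfl, ?_⟩
    rcases mul_eq_zero.mp hc' with h | h
    exacts [.inl (by linear_combination h), .inr (by linear_combination h)]
  · rintro ⟨rfl, rfl, rfl | rfl⟩ <;> norm_num

end fanoW

theorem stmt11 :
    {p : ℂ × ℂ × ℂ | p.1 * (1 + p.1) * p.2.1 * (1 + p.2.1) * p.2.2 ≠ 0 ∧
        fderiv ℂ fanoW p = 0}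
      = {(-1/2, -1/2, 4), (-1/2, -1/2, -4)} ∧
    fanoW (-1/2, -1/2, 4) = 8 ∧ fanoW (-1/2, -1/2, -4) = -8 := by
  refine ⟨?_, by norm_num [fanoW], by norm_num [fanoW]⟩
  ext ⟨a, b, c⟩
  simp only [Set.mem_ofPred_eq, Set.mem_insert_iff, Set.mem_singleton_iff, Prod.mk.injEq]
  constructor
  · rintro ⟨hD, hcrit⟩
    obtain ⟨rfl, rfl, rfl | rfl⟩ :=
      fanoW_critical_equations_iff.mp ((fderiv_fanoW_eq_zero_iff hD).mp hcrit)
    exacts [.inl ⟨rfl, rfl, rfl⟩, .inr ⟨rfl, rfl, rfl⟩]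
  · rintro (⟨rfl, rfl, rfl⟩ | ⟨rfl, rfl, rfl⟩) <;>
      refine ⟨by norm_num, (fderiv_fanoW_eq_zero_iff (by norm_num)).mpr ?_⟩ <;>
      norm_num
end

section
/- The set $\mathcal{M}=\{(A,B)\in SU(2)\times SU(2) : ABA^{-1}B^{-1}=-I\}$ is nonempty — it contains the pair $A=\begin{pmatrix} i & 0\\ 0 & -i\end{pmatrix}$, $B=\begin{pmatrix} 0 & 1\\ -1 & 0\end{pmatrix}$ — and $SU(2)$ acts transitively on $\mathcal{M}$ by simultaneous conjugation: for any two pairs $(A,B),(A',B')\in\mathcal{M}$ there exists $g\in SU(2)$ with $gAg^{-1}=A'$ and $gBg^{-1}=B'$. -/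
/-!
Both conditions say that `A, B ∈ SU(2)` anticommute; then `tr A = tr B = 0`, so
`A² = B² = -1` by Cayley–Hamilton. If `X² = Y² = -1`, then `g ↦ g - YgX` turns every `g`
into a solution of `Y h = h X`, and it keeps any relation `Z g = g W` in which `W`, `Z`
anticommute with `X`, `Y`. Applying it to `g = 1` with `(A, A')` and then with `(B, B')`
yields a matrix conjugating `(A, B)` to `(A', B')`. For `g ∈ SU(2)` it equals `g (1 - U)`
with `U ∈ SU(2)`, and `(1 - U)ᴴ (1 - U) = det (1 - U) • 1 = (2 - tr U) • 1`, so it is a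
positive multiple of an element of `SU(2)` unless it vanishes; in that case `YgX = g`, and
`g W` works for any `W` anticommuting with `X`.
-/

open Matrix Complex

/-- The set of pairs `(A, B)` of `SU(2)` matrices with `ABA⁻¹B⁻¹ = -I`. -/
def commMinusOne : Set (Matrix (Fin 2) (Fin 2) ℂ × Matrix (Fin 2) (Fin 2) ℂ) :=
  {p | p.1 ∈ Matrix.specialUnitaryGroup (Fin 2) ℂ ∧
       p.2 ∈ Matrix.specialUnitaryGroup (Fin 2) ℂ ∧
       p.1 * p.2 * p.1⁻¹ * p.2⁻¹ = -1}

local notation "SU₂" => Matrix.specialUnitaryGroup (Fin 2) ℂ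

section Ring

variable {R : Type*} [Ring R] {g X Y Z W : R}

theorem semiconjBy_sub_mul_mul (hX : X * X = -1) (hY : Y * Y = -1) :
    SemiconjBy (g - Y * g * X) X Y := by
  unfold SemiconjBy
  calc (g - Y * g * X) * X = g * X - Y * g * (X * X) := by noncomm_ring
    _ = Y * g - (Y * Y) * g * X := by rw [hX, hY]; noncomm_ring
    _ = Y * (g - Y * g * X) := by noncomm_ring

theorem SemiconjBy.sub_mul_mul (h : SemiconjBy g W Z) (hXW : X * W = -(W * X))
    (hYZ : Y * Z = -(Z * Y)) : SemiconjBy (g - Y * g * X) W Z := by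
  unfold SemiconjBy at *
  calc (g - Y * g * X) * W = g * W - Y * g * (X * W) := by noncomm_ring
    _ = g * W + Y * (g * W) * X := by rw [hXW]; noncomm_ring
    _ = Z * g + Y * Z * g * X := by rw [h]; noncomm_ring
    _ = Z * (g - Y * g * X) := by rw [hYZ]; noncomm_ring

theorem semiconjBy_neg_of_mul_mul_eq (hX : X * X = -1) (h : Y * g * X = g) :
    SemiconjBy g (-X) Y :=
  calc g * -X = Y * g * X * -X := by rw [h]
    _ = Y * g := by rw [mul_assoc, mul_neg, hX, neg_neg, mul_one]

end Ring

section Matrix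

variable {n : Type*} [Fintype n] [DecidableEq n]

theorem SemiconjBy.mul_inv_eq {R : Type*} [CommRing R] {g X Y : Matrix n n R}
    (hg : IsUnit g.det) (h : SemiconjBy g X Y) : g * X * g⁻¹ = Y := by
  rw [h.eq]
  exact mul_nonsing_inv_cancel_right g Y hg

theorem trace_eq_zero_of_mul_eq_neg_mul {U V : Matrix n n ℂ} (hV : V ∈ unitaryGroup n ℂ)
    (h : U * V = -(V * U)) : U.trace = 0 := by
  have hUV : U.trace = -U.trace :=
    calc U.trace = (star V * (U * V)).trace := by
          rw [trace_mul_comm, mul_assoc, Unitary.mul_star_self_of_mem hV, mul_one]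
      _ = -U.trace := by
          rw [h, mul_neg, trace_neg, ← mul_assoc, Unitary.star_mul_self_of_mem hV, one_mul]
  linear_combination hUV / 2

theorem det_one_sub_fin_two {R : Type*} [CommRing R] (U : Matrix (Fin 2) (Fin 2) R) :
    (1 - U).det = 1 - U.trace + U.det := by
  simp [det_fin_two, trace_fin_two, one_apply]
  ring

end Matrix

section SpecialUnitary

variable {U g X Y : Matrix (Fin 2) (Fin 2) ℂ}

theorem isUnit_det_of_mem_specialUnitaryGroup (hU : U ∈ SU₂) : IsUnit U.det := by
  rw [(mem_specialUnitaryGroup_iff.mp hU).2]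
  exact isUnit_one

theorem star_mem_specialUnitaryGroup (hU : U ∈ SU₂) : star U ∈ SU₂ :=
  (star (⟨U, hU⟩ : SU₂)).2

theorem star_eq_trace_smul_sub (hU : U ∈ SU₂) : star U = U.trace • 1 - U := by
  obtain ⟨hUnit, hdet⟩ := mem_specialUnitaryGroup_iff.mp hU
  rw [← inv_eq_left_inv (mem_unitaryGroup_iff'.mp hUnit), Matrix.inv_def, hdet,
    Ring.inverse_one, one_smul, adjugate_fin_two]
  ext i j
  fin_cases i <;> fin_cases j <;> simp [trace_fin_two]

theorem mul_self_eq_neg_one_of_trace_eq_zero (hU : U ∈ SU₂) (htr : U.trace = 0) :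
    U * U = -1 := by
  have h := Unitary.mul_star_self_of_mem hU.1
  rw [star_eq_trace_smul_sub hU, htr, zero_smul, zero_sub, mul_neg] at h
  exact neg_eq_iff_eq_neg.mp h

theorem star_one_sub_mul_one_sub (hU : U ∈ SU₂) :
    star (1 - U) * (1 - U) = (2 - U.trace) • 1 := by
  rw [star_sub, star_one, sub_mul, mul_sub, mul_sub, Unitary.star_mul_self_of_mem hU.1,
    star_eq_trace_smul_sub hU]
  simp only [one_mul, mul_one]
  module

open scoped ComplexOrder in
theorem exists_smul_mem_specialUnitaryGroup {M : Matrix (Fin 2) (Fin 2) ℂ} (hM : M ≠ 0) {s : ℂ}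
    (hs : star M * M = s • 1) (hdet : M.det = s) : ∃ c : ℂ, c • M ∈ SU₂ := by
  -- `s` is real and nonnegative, being the `(0, 0)` entry of `star M * M`
  obtain ⟨r, hr0, rfl⟩ : ∃ r : ℝ, 0 ≤ r ∧ s = r :=
    ⟨normSq (M 0 0) + normSq (M 1 0), add_nonneg (normSq_nonneg _) (normSq_nonneg _), by
      simpa [mul_apply, Fin.sum_univ_two, ← normSq_eq_conj_mul_self] using
        (congrFun (congrFun hs 0) 0).symm⟩
  have hr : 0 < r := by
    refine lt_of_le_of_ne hr0 fun h => hM (conjTranspose_mul_self_eq_zero.mp ?_)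
    rw [← star_eq_conjTranspose, hs, ← h, ofReal_zero, zero_smul]
  have hc : (((√r)⁻¹ ^ 2 * r : ℝ) : ℂ) = 1 := by
    rw [inv_pow, Real.sq_sqrt hr.le, inv_mul_cancel₀ hr.ne', ofReal_one]
  refine ⟨((√r)⁻¹ : ℝ), mem_specialUnitaryGroup_iff.mpr ⟨mem_unitaryGroup_iff'.mpr ?_, ?_⟩⟩
  · rw [star_smul, smul_mul_smul_comm, hs, smul_smul, Complex.star_def, conj_ofReal, ← sq,
      ← ofReal_pow, ← ofReal_mul, hc, one_smul]
  · rw [det_smul, hdet, Fintype.card_fin]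
    exact_mod_cast hc

theorem exists_smul_one_sub_mem (hU : U ∈ SU₂) (h : U ≠ 1) : ∃ c : ℂ, c • (1 - U) ∈ SU₂ :=
  exists_smul_mem_specialUnitaryGroup (sub_ne_zero.mpr h.symm) (star_one_sub_mul_one_sub hU)
    (by rw [det_one_sub_fin_two, (mem_specialUnitaryGroup_iff.mp hU).2]; ring)

theorem exists_smul_sub_mul_mul_mem (hg : g ∈ SU₂) (hX : X ∈ SU₂) (hY : Y ∈ SU₂)
    (h : Y * g * X ≠ g) : ∃ c : ℂ, c • (g - Y * g * X) ∈ SU₂ := by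
  set U := star g * (Y * g * X)
  have hgU : g * (1 - U) = g - Y * g * X := by
    rw [mul_sub, mul_one, ← mul_assoc, Unitary.mul_star_self_of_mem hg.1, one_mul]
  have hU : U ∈ SU₂ := mul_mem (star_mem_specialUnitaryGroup hg) (mul_mem (mul_mem hY hg) hX)
  have hU1 : U ≠ 1 := fun hU1 => h (sub_eq_zero.mp (by simpa [hU1] using hgU.symm)).symm
  obtain ⟨c, hc⟩ := exists_smul_one_sub_mem hU hU1
  exact ⟨c, by rw [← hgU, ← mul_smul_comm]; exact mul_mem hg hc⟩

end SpecialUnitary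

theorem mem_commMinusOne_iff {p : Matrix (Fin 2) (Fin 2) ℂ × Matrix (Fin 2) (Fin 2) ℂ} :
    p ∈ commMinusOne ↔ p.1 ∈ SU₂ ∧ p.2 ∈ SU₂ ∧ p.1 * p.2 = -(p.2 * p.1) := by
  obtain ⟨A, B⟩ := p
  refine and_congr_right fun hA => and_congr_right fun hB => ?_
  have hA' := isUnit_det_of_mem_specialUnitaryGroup hA
  have hB' := isUnit_det_of_mem_specialUnitaryGroup hB
  constructor
  · intro h
    calc A * B = A * B * A⁻¹ * B⁻¹ * (B * A) := by
          rw [← mul_assoc, nonsing_inv_mul_cancel_right B _ hB',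
            nonsing_inv_mul_cancel_right A _ hA']
      _ = -(B * A) := by rw [h, neg_one_mul]
  · intro h
    rw [h, neg_mul, neg_mul, mul_nonsing_inv_cancel_right A B hA', mul_nonsing_inv B hB']

namespace commMinusOne

variable {p q : Matrix (Fin 2) (Fin 2) ℂ × Matrix (Fin 2) (Fin 2) ℂ}

theorem fst_mul_self (hp : p ∈ commMinusOne) : p.1 * p.1 = -1 := by
  obtain ⟨hA, hB, hAB⟩ := mem_commMinusOne_iff.mp hp
  exact mul_self_eq_neg_one_of_trace_eq_zero hA (trace_eq_zero_of_mul_eq_neg_mul hB.1 hAB)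

theorem snd_mul_self (hp : p ∈ commMinusOne) : p.2 * p.2 = -1 := by
  obtain ⟨hA, hB, hAB⟩ := mem_commMinusOne_iff.mp hp
  exact mul_self_eq_neg_one_of_trace_eq_zero hB
    (trace_eq_zero_of_mul_eq_neg_mul hA.1 (by rw [hAB, neg_neg]))

theorem exists_semiconjBy_fst (hp : p ∈ commMinusOne) (hq : q ∈ commMinusOne) :
    ∃ g ∈ SU₂, SemiconjBy g p.1 q.1 := by
  obtain ⟨hA, hB, hAB⟩ := mem_commMinusOne_iff.mp hp
  obtain ⟨hA', -, -⟩ := mem_commMinusOne_iff.mp hq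
  by_cases h : q.1 * 1 * p.1 = 1
  · refine ⟨p.2, hB, ?_⟩
    simpa only [one_mul] using (semiconjBy_neg_of_mul_mul_eq (fst_mul_self hp) h).mul_left
      (by rw [SemiconjBy, neg_mul, hAB, neg_neg])
  · obtain ⟨c, hc⟩ := exists_smul_sub_mul_mul_mem (one_mem _) hA hA' h
    exact ⟨_, hc, (semiconjBy_sub_mul_mul (fst_mul_self hp) (fst_mul_self hq)).smul_left c⟩

theorem exists_semiconjBy (hp : p ∈ commMinusOne) (hq : q ∈ commMinusOne) :
    ∃ g ∈ SU₂, SemiconjBy g p.1 q.1 ∧ SemiconjBy g p.2 q.2 := by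
  obtain ⟨hA, hB, hAB⟩ := mem_commMinusOne_iff.mp hp
  obtain ⟨-, hB', hAB'⟩ := mem_commMinusOne_iff.mp hq
  obtain ⟨g, hg, hgA⟩ := exists_semiconjBy_fst hp hq
  by_cases h : q.2 * g * p.2 = g
  · refine ⟨g * p.1, mul_mem hg hA, hgA.mul_left (Commute.refl p.1), ?_⟩
    exact (semiconjBy_neg_of_mul_mul_eq (snd_mul_self hp) h).mul_left
      (by rw [SemiconjBy, neg_mul]; exact hAB)
  · obtain ⟨c, hc⟩ := exists_smul_sub_mul_mul_mem hg hB hB' h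
    refine ⟨_, hc, ?_, ?_⟩
    · exact (hgA.sub_mul_mul (by rw [hAB, neg_neg]) (by rw [hAB', neg_neg])).smul_left c
    · exact (semiconjBy_sub_mul_mul (snd_mul_self hp) (snd_mul_self hq)).smul_left c

theorem standardPair_mem : (!![I, 0; 0, -I], !![0, 1; -1, 0]) ∈ commMinusOne := by
  refine mem_commMinusOne_iff.mpr ⟨?_, ?_, by simp⟩
  all_goals
    rw [mem_specialUnitaryGroup_iff, mem_unitaryGroup_iff, star_eq_conjTranspose, det_fin_two_of]
    refine ⟨?_, by simp⟩
    ext i j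
    fin_cases i <;> fin_cases j <;> simp [mul_apply, Fin.sum_univ_two]

end commMinusOne

theorem stmt13 :
    (!![I, 0; 0, -I], !![0, 1; -1, 0]) ∈ commMinusOne ∧
    ∀ p ∈ commMinusOne, ∀ q ∈ commMinusOne,
      ∃ g ∈ Matrix.specialUnitaryGroup (Fin 2) ℂ,
        g * p.1 * g⁻¹ = q.1 ∧ g * p.2 * g⁻¹ = q.2 := by
  refine ⟨commMinusOne.standardPair_mem, fun p hp q hq => ?_⟩
  obtain ⟨g, hg, h₁, h₂⟩ := commMinusOne.exists_semiconjBy hp hq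
  have hg' := isUnit_det_of_mem_specialUnitaryGroup hg
  exact ⟨g, hg, h₁.mul_inv_eq hg', h₂.mul_inv_eq hg'⟩
end
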